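/- Let R be a principal ideal domain in which every proper quotient ring is finite, and let M and N be free R-modules of rank n with N ⊆ M and [M : N] finite. Then for every 1 ≤ k ≤ n, the index of ⋀^k(N) in ⋀^k(M) equals [M : N]^(binom(n-1, k-1)). -/

import Mathlib

/-- The `R`-linear map `⋀^k(f) : ⋀^k(M) → ⋀^k(N)` induced by an `R`-linear map `f : M → N`. -/
noncomputable def exteriorPowerMap {R M N : Type*} [CommRing R] [AddCommGroup M] [Module R M]
    [AddCommGroup N] [Module R N] (k : ℕ) (f : M →ₗ[R] N) : ⋀[R]^k M →ₗ[R] ⋀[R]^k N :=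
  LinearMap.restrict (ExteriorAlgebra.map f).toLinearMap (p := ⋀[R]^k M) (q := ⋀[R]^k N)
    (fun x hx => by
      have h1 : Submodule.map (ExteriorAlgebra.map f).toLinearMap (⋀[R]^k M) ≤ ⋀[R]^k N := by
        rw [Submodule.map_pow]
        refine pow_le_pow_left' ?_ k
        rw [ExteriorAlgebra.ι_range_map_map]
        exact LinearMap.map_le_range
      exact h1 (Submodule.mem_map_of_mem hx))

/-!
By the Smith normal form, `M` has a basis `b` such that `a₁ b₁, …, aₙ bₙ` is a basis of `N`, with
all `aᵢ ≠ 0`; hence `[M : N] = ∏ᵢ |R/(aᵢ)|`. The wedges `b_S` over `k`-subsets `S` form a basis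
of `⋀^k M`, and `⋀^k N` is spanned by the `a_S b_S` with `a_S = ∏_{i ∈ S} aᵢ`. So the index of
`⋀^k N` is `∏_S |R/(a_S)| = ∏_S ∏_{i ∈ S} |R/(aᵢ)|`, and each `i` lies in exactly
`binom(n-1, k-1)` of the sets `S`.
-/

open Module Submodule

section ExteriorPower

variable {R M N : Type*} [CommRing R] [AddCommGroup M] [Module R M] [AddCommGroup N] [Module R N]

theorem exteriorPowerMap_eq_map (k : ℕ) (f : M →ₗ[R] N) :
    exteriorPowerMap k f = exteriorPower.map k f := by
  ext v
  simp [exteriorPowerMap, ExteriorAlgebra.map_apply_ιMulti, Function.comp_def]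

namespace exteriorPower

variable {ι : Type*} [LinearOrder ι]

theorem ιMulti_family_smul (k : ℕ) (a : ι → R) (v : ι → M) (s : Set.powersetCard ι k) :
    ιMulti_family R k (fun i => a i • v i) s = (∏ i ∈ s.val, a i) • ιMulti_family R k v s := by
  simp only [ιMulti_family, Function.comp_def]
  rw [AlternatingMap.map_smul_univ, ← Finset.map_orderEmbOfFin_univ s.val s.prop, Finset.prod_map]
  rfl

theorem range_map_eq_span_ιMulti_family (k : ℕ) (f : M →ₗ[R] N) (b : Basis ι R M) :
    LinearMap.range (map k f) = span R (Set.range (ιMulti_family R k (f ∘ b))) := by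
  rw [LinearMap.range_eq_map, ← (b.exteriorPower k).span_eq, Submodule.map_span, ← Set.range_comp,
    coe_basis, map_comp_ιMulti_family]

end exteriorPower

end ExteriorPower

section QuotientCard

variable {R : Type*} [CommRing R]

theorem Module.Basis.map_equivFun_span_smul {M ι : Type*} [AddCommGroup M] [Module R M]
    [Fintype ι] [DecidableEq ι] (b : Basis ι R M) (c : ι → R) :
    (span R (Set.range fun i => c i • b i)).map (b.equivFun : M →ₗ[R] ι → R) =
      pi Set.univ fun i => Ideal.span {c i} := by
  rw [map_span, ← Set.range_comp, ← iSup_map_single, span_range_eq_iSup]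
  congr 1
  ext i : 1
  rw [Ideal.span, map_span, Set.image_singleton]
  simp [Finsupp.single_eq_pi_single, ← Pi.single_smul']

theorem Module.Basis.card_quotient_span_smul {M ι : Type*} [AddCommGroup M] [Module R M]
    [Fintype ι] (b : Basis ι R M) (c : ι → R) :
    Nat.card (M ⧸ span R (Set.range fun i => c i • b i)) =
      ∏ i, Nat.card (R ⧸ Ideal.span {c i}) := by
  classical
  rw [Nat.card_congr ((Quotient.equiv _ _ b.equivFun (b.map_equivFun_span_smul c)).trans
    (quotientPi _)).toEquiv, Nat.card_pi]

variable [IsDomain R]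

theorem Ideal.card_quotient_span_mul {a : R} (ha : a ≠ 0) (b : R) :
    Nat.card (R ⧸ Ideal.span {a * b}) =
      Nat.card (R ⧸ Ideal.span {a}) * Nat.card (R ⧸ Ideal.span {b}) := by
  have hle : Ideal.span {a * b} ≤ Ideal.span {a} :=
    Ideal.span_singleton_le_span_singleton.2 (dvd_mul_right a b)
  -- multiplication by `a` identifies `R/(b)` with `(a)/(ab)`
  let g := (Ideal.span {a * b}).mkQ ∘ₗ LinearMap.toSpanSingleton R R a
  have hker : LinearMap.ker g = Ideal.span {b} := by
    ext r
    simp only [g, LinearMap.mem_ker, LinearMap.comp_apply, mkQ_apply, Quotient.mk_eq_zero,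
      LinearMap.toSpanSingleton_apply, smul_eq_mul, Ideal.mem_span_singleton, mul_comm r,
      mul_dvd_mul_iff_left ha]
  have hrange : LinearMap.range g = Submodule.map (Ideal.span {a * b}).mkQ (Ideal.span {a}) := by
    rw [LinearMap.range_comp, ← LinearMap.span_singleton_eq_range]
  rw [← card_quotient_mul_card_quotient _ _ hle, ← hrange, ← hker,
    Nat.card_congr g.quotKerEquivRange.toEquiv, mul_comm]

theorem Ideal.card_quotient_span_prod {ι : Type*} (s : Finset ι) {a : ι → R}
    (ha : ∀ i ∈ s, a i ≠ 0) :
    Nat.card (R ⧸ Ideal.span {∏ i ∈ s, a i}) = ∏ i ∈ s, Nat.card (R ⧸ Ideal.span {a i}) := by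
  induction s using Finset.cons_induction with
  | empty => simp
  | cons i s _ ih =>
    rw [Finset.forall_mem_cons] at ha
    rw [Finset.prod_cons, Finset.prod_cons, card_quotient_span_mul ha.1, ih ha.2]

end QuotientCard

section PowersetCard

variable {ι M : Type*} [Fintype ι] [CommMonoid M]

theorem Finset.prod_powersetCard_prod_eq_pow [DecidableEq ι] {k : ℕ} (hk : 1 ≤ k) (q : ι → M) :
    ∏ s ∈ univ.powersetCard k, ∏ i ∈ s, q i =
      (∏ i, q i) ^ (Fintype.card ι - 1).choose (k - 1) := by
  rw [prod_comm' (t' := univ) (s' := fun i => (univ.powersetCard k).filter ({i} ⊆ ·))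
    (by intro s i; simp [and_comm]), ← prod_pow]
  refine prod_congr rfl fun i _ => ?_
  rw [prod_const, card_filter_powersetCard_subset _ _ _ (subset_univ _) (by simpa using hk)]
  simp

theorem Set.powersetCard.prod_prod_eq_pow [LinearOrder ι] {k : ℕ} (hk : 1 ≤ k) (q : ι → M) :
    ∏ s : Set.powersetCard ι k, ∏ i ∈ s.val, q i =
      (∏ i, q i) ^ (Fintype.card ι - 1).choose (k - 1) := by
  rw [← Finset.prod_powersetCard_prod_eq_pow hk,
    Finset.prod_subtype _ fun s => Finset.mem_powersetCard_univ]
  rfl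

end PowersetCard

open exteriorPower in
theorem index_exteriorPower_general {R : Type*} [CommRing R] [IsDomain R] [IsPrincipalIdealRing R]
    {M : Type*} [AddCommGroup M] [Module R M] [Module.Free R M] [Module.Finite R M]
    (n : ℕ) (hrankM : Module.finrank R M = n)
    (N : Submodule R M)
    (hrankN : Module.finrank R ↥N = n)
    (k : ℕ) (hk1 : 1 ≤ k) :
    Nat.card ((⋀[R]^k M) ⧸ LinearMap.range (exteriorPowerMap k N.subtype))
      = Nat.card (M ⧸ N) ^ Nat.choose (n - 1) (k - 1) := by
  have h : finrank R N = finrank R M := hrankN.trans hrankM.symm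
  let b := finBasisOfFinrankEq R M hrankM
  let a := smithNormalFormCoeffs b h
  let bM := smithNormalFormTopBasis b h
  have hbN : N.subtype ∘ smithNormalFormBotBasis b h = fun i => a i • bM i :=
    funext (smithNormalFormBotBasis_def b h)
  have hrange : LinearMap.range (exteriorPowerMap k N.subtype)
      = span R (Set.range fun s => (∏ i ∈ s.val, a i) • bM.exteriorPower k s) := by
    rw [exteriorPowerMap_eq_map, range_map_eq_span_ιMulti_family k N.subtype
      (smithNormalFormBotBasis b h), hbN]
    congr 2
    ext s : 1
    rw [ιMulti_family_smul, basis_apply]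
  rw [hrange, (bM.exteriorPower k).card_quotient_span_smul,
    Nat.card_congr (N.quotientEquivPiSpan b h).toEquiv, Nat.card_pi,
    Finset.prod_congr rfl fun s _ =>
      Ideal.card_quotient_span_prod s.val fun i _ => smithNormalFormCoeffs_ne_zero b h i,
    Set.powersetCard.prod_prod_eq_pow hk1, Fintype.card_fin]

/-- Let `R` be a principal ideal domain in which every proper quotient ring is finite, and let
`M` and `N` be free `R`-modules of rank `n` with `N ⊆ M` of finite index `[M : N]`.  Then for
every `1 ≤ k ≤ n`, the index of `⋀^k(N)` in `⋀^k(M)` (where `⋀^k(N)` is embedded in `⋀^k(M)` via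
the map induced by the inclusion) equals `[M : N] ^ binom(n-1, k-1)`. -/
theorem index_exteriorPower {R : Type*} [CommRing R] [IsDomain R] [IsPrincipalIdealRing R]
    (hfin : ∀ I : Ideal R, I ≠ ⊥ → Finite (R ⧸ I))
    {M : Type*} [AddCommGroup M] [Module R M] [Module.Free R M] [Module.Finite R M]
    (n : ℕ) (hrankM : Module.finrank R M = n)
    (N : Submodule R M) [Module.Free R ↥N] [Module.Finite R ↥N]
    (hrankN : Module.finrank R ↥N = n)
    (hidx : Finite (M ⧸ N))
    (k : ℕ) (hk1 : 1 ≤ k) (hk2 : k ≤ n) :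
    Nat.card ((⋀[R]^k M) ⧸ LinearMap.range (exteriorPowerMap k N.subtype))
      = Nat.card (M ⧸ N) ^ Nat.choose (n - 1) (k - 1) :=
  index_exteriorPower_general n hrankM N hrankN k hk1
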